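/- arXiv:1701.07204 — 8 statements merged into one kernel-verified Lean document; each statement's English description precedes it below -/
import Mathlib

section
/- Let x_1 ≤ x_2 ≤ … ≤ x_n be real numbers and let CC denote the squared-distance cluster cost with the convention CC(i,j) = 0 when i > j. Then for all indices u < v and a < b (with v, u ≤ n and a, b ≤ n), the concave (Monge) inequality holds: CC(v, b) + CC(u, a) ≤ CC(u, b) + CC(v, a). -/
/-- The squared-distance cluster cost of grouping `x_i, …, x_j` into one cluster
with the optimal centroid (the arithmetic mean).  For `i > j` the interval
`Icc i j` is empty and the cost is `0`, matching the convention `CC(i,j) = 0`. -/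
noncomputable def clusterCost (x : ℕ → ℝ) (i j : ℕ) : ℝ :=
  ∑ ℓ ∈ Finset.Icc i j,
    (x ℓ - (∑ t ∈ Finset.Icc i j, x t) / ((Finset.Icc i j).card : ℝ)) ^ 2

lemma clusterCost_nonneg (x : ℕ → ℝ) (i j : ℕ) : 0 ≤ clusterCost x i j :=
  Finset.sum_nonneg fun ℓ _ => sq_nonneg _

lemma clusterCost_empty (x : ℕ → ℝ) {i j : ℕ} (h : j < i) : clusterCost x i j = 0 := by
  simp [clusterCost, Finset.Icc_eq_empty_of_lt h]

lemma clusterCost_self (x : ℕ → ℝ) (i : ℕ) : clusterCost x i i = 0 := by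
  simp [clusterCost]

lemma clusterCost_eq (x : ℕ → ℝ) {i j : ℕ} (h : i ≤ j) :
    clusterCost x i j = (∑ ℓ ∈ Finset.Icc i j, (x ℓ) ^ 2)
      - (∑ ℓ ∈ Finset.Icc i j, x ℓ) ^ 2 / ((Finset.Icc i j).card : ℝ) := by
  have hcard : (Finset.Icc i j).card = j + 1 - i := Nat.card_Icc i j
  have hm : (0 : ℝ) < ((Finset.Icc i j).card : ℝ) := by
    have : 0 < (Finset.Icc i j).card := by rw [hcard]; omega
    exact_mod_cast this
  set m : ℝ := ((Finset.Icc i j).card : ℝ) with hmdef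
  set S : ℝ := ∑ ℓ ∈ Finset.Icc i j, x ℓ with hSdef
  have expand : ∀ ℓ ∈ Finset.Icc i j,
      (x ℓ - S / m) ^ 2 = (x ℓ) ^ 2 - 2 * (S / m) * x ℓ + (S / m) ^ 2 := by
    intro ℓ _; ring
  rw [clusterCost, Finset.sum_congr rfl expand]
  rw [Finset.sum_add_distrib, Finset.sum_sub_distrib, ← Finset.mul_sum, Finset.sum_const,
    nsmul_eq_mul]
  rw [← hSdef, ← hmdef]
  field_simp
  ring

/-- The key quadratic inequality. -/
lemma key_ineq (k B p q : ℝ) (hk : 1 ≤ k) (h1 : k * p ≤ B) (h2 : B ≤ k * q) :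
    (B + p + q) ^ 2 / (k + 2) + B ^ 2 / k
      ≤ (B + q) ^ 2 / (k + 1) + (B + p) ^ 2 / (k + 1) := by
  have hk0 : (0 : ℝ) < k := by linarith
  have hk1 : (0 : ℝ) < k + 1 := by linarith
  have hk2 : (0 : ℝ) < k + 2 := by linarith
  have hid : ((B + q) ^ 2 / (k + 1) + (B + p) ^ 2 / (k + 1))
      - ((B + p + q) ^ 2 / (k + 2) + B ^ 2 / k)
      = (k * (p - q) ^ 2 + 2 * (B - k * p) * (k * q - B)) / (k * (k + 1) * (k + 2)) := by
    field_simp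
    ring
  have hnum : 0 ≤ k * (p - q) ^ 2 + 2 * (B - k * p) * (k * q - B) := by
    have h3 : 0 ≤ (B - k * p) * (k * q - B) := mul_nonneg (by linarith) (by linarith)
    nlinarith [sq_nonneg (p - q)]
  have hden : 0 < k * (k + 1) * (k + 2) := by positivity
  nlinarith [div_nonneg hnum hden.le]

/-- Adjacent quadrangle (Monge) inequality, main case `i < j`. -/
lemma adjacent_main (n : ℕ) (x : ℕ → ℝ)
    (hsort : ∀ ⦃p q : ℕ⦄, 1 ≤ p → p ≤ q → q ≤ n → x p ≤ x q)
    {i j : ℕ} (hi : 1 ≤ i) (hij : i < j) (hjn : j + 1 ≤ n) :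
    clusterCost x (i + 1) (j + 1) + clusterCost x i j
      ≤ clusterCost x i (j + 1) + clusterCost x (i + 1) j := by
  have h1 : i ≤ j := hij.le
  have h2 : i + 1 ≤ j := hij
  have h3 : i + 1 ≤ j + 1 := by omega
  have h4 : i ≤ j + 1 := by omega
  -- set decompositions
  have hni : i ∉ Finset.Icc (i + 1) j := by simp
  have hnj : j + 1 ∉ Finset.Icc (i + 1) j := by simp
  have hni' : i ∉ insert (j + 1) (Finset.Icc (i + 1) j) := by
    simp [Finset.mem_insert]; omega
  have e1 : Finset.Icc i j = insert i (Finset.Icc (i + 1) j) := by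
    ext ℓ; simp [Finset.mem_Icc, Finset.mem_insert]; omega
  have e2 : Finset.Icc (i + 1) (j + 1) = insert (j + 1) (Finset.Icc (i + 1) j) := by
    ext ℓ; simp [Finset.mem_Icc, Finset.mem_insert]; omega
  have e3 : Finset.Icc i (j + 1) = insert i (insert (j + 1) (Finset.Icc (i + 1) j)) := by
    ext ℓ; simp [Finset.mem_Icc, Finset.mem_insert]; omega
  set p : ℝ := x i with hp
  set q : ℝ := x (j + 1) with hq
  set B : ℝ := ∑ ℓ ∈ Finset.Icc (i + 1) j, x ℓ with hB
  set Q : ℝ := ∑ ℓ ∈ Finset.Icc (i + 1) j, (x ℓ) ^ 2 with hQ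
  set kn : ℕ := (Finset.Icc (i + 1) j).card with hkn
  have hknval : kn = j - i := by rw [hkn, Nat.card_Icc]; omega
  have hk1 : 1 ≤ kn := by omega
  set k : ℝ := (kn : ℝ) with hk
  have hkR : (1 : ℝ) ≤ k := by rw [hk]; exact_mod_cast hk1
  -- sums
  have s1 : ∑ ℓ ∈ Finset.Icc i j, x ℓ = p + B := by rw [e1, Finset.sum_insert hni]
  have s2 : ∑ ℓ ∈ Finset.Icc (i + 1) (j + 1), x ℓ = q + B := by
    rw [e2, Finset.sum_insert hnj]
  have s3 : ∑ ℓ ∈ Finset.Icc i (j + 1), x ℓ = p + (q + B) := by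
    rw [e3, Finset.sum_insert hni', Finset.sum_insert hnj]
  have q1 : ∑ ℓ ∈ Finset.Icc i j, (x ℓ) ^ 2 = p ^ 2 + Q := by
    rw [e1, Finset.sum_insert hni]
  have q2 : ∑ ℓ ∈ Finset.Icc (i + 1) (j + 1), (x ℓ) ^ 2 = q ^ 2 + Q := by
    rw [e2, Finset.sum_insert hnj]
  have q3 : ∑ ℓ ∈ Finset.Icc i (j + 1), (x ℓ) ^ 2 = p ^ 2 + (q ^ 2 + Q) := by
    rw [e3, Finset.sum_insert hni', Finset.sum_insert hnj]
  -- cards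
  have c1 : ((Finset.Icc i j).card : ℝ) = k + 1 := by
    have : (Finset.Icc i j).card = kn + 1 := by rw [Nat.card_Icc]; omega
    rw [this]; push_cast; ring
  have c2 : ((Finset.Icc (i + 1) (j + 1)).card : ℝ) = k + 1 := by
    have : (Finset.Icc (i + 1) (j + 1)).card = kn + 1 := by rw [Nat.card_Icc]; omega
    rw [this]; push_cast; ring
  have c3 : ((Finset.Icc i (j + 1)).card : ℝ) = k + 2 := by
    have : (Finset.Icc i (j + 1)).card = kn + 2 := by rw [Nat.card_Icc]; omega
    rw [this]; push_cast; ring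
  -- bounds on B
  have hBlow : k * p ≤ B := by
    have : ∀ ℓ ∈ Finset.Icc (i + 1) j, p ≤ x ℓ := by
      intro ℓ hℓ
      rw [Finset.mem_Icc] at hℓ
      exact hsort hi (by omega) (by omega)
    have h := Finset.card_nsmul_le_sum (Finset.Icc (i + 1) j) x p this
    rw [nsmul_eq_mul] at h
    exact_mod_cast h
  have hBhigh : B ≤ k * q := by
    have : ∀ ℓ ∈ Finset.Icc (i + 1) j, x ℓ ≤ q := by
      intro ℓ hℓ
      rw [Finset.mem_Icc] at hℓ
      exact hsort (by omega) (by omega) hjn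
    have h := Finset.sum_le_card_nsmul (Finset.Icc (i + 1) j) x q this
    rw [nsmul_eq_mul] at h
    exact_mod_cast h
  rw [clusterCost_eq x h1, clusterCost_eq x h2, clusterCost_eq x h3,
    clusterCost_eq x h4, s1, s2, s3, q1, q2, q3, c1, c2, c3, ← hB, ← hQ, ← hkn, ← hk]
  have hkey := key_ineq k B p q hkR hBlow hBhigh
  rw [show (q + B) ^ 2 = (B + q) ^ 2 from by ring,
    show (p + B) ^ 2 = (B + p) ^ 2 from by ring,
    show (p + (q + B)) ^ 2 = (B + p + q) ^ 2 from by ring]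
  linarith [hkey]

/-- Adjacent quadrangle inequality, all cases. -/
lemma adjacent (n : ℕ) (x : ℕ → ℝ)
    (hsort : ∀ ⦃p q : ℕ⦄, 1 ≤ p → p ≤ q → q ≤ n → x p ≤ x q)
    {i j : ℕ} (hi : 1 ≤ i) (hjn : j + 1 ≤ n) :
    clusterCost x (i + 1) (j + 1) + clusterCost x i j
      ≤ clusterCost x i (j + 1) + clusterCost x (i + 1) j := by
  rcases lt_trichotomy i j with h | h | h
  · exact adjacent_main n x hsort hi h hjn
  · subst h
    have e1 : clusterCost x (i + 1) (i + 1) = 0 := clusterCost_self x (i + 1)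
    have e2 : clusterCost x i i = 0 := clusterCost_self x i
    have e3 : clusterCost x (i + 1) i = 0 := clusterCost_empty x (by omega)
    have e4 : 0 ≤ clusterCost x i (i + 1) := clusterCost_nonneg x i (i + 1)
    linarith
  · have e1 : clusterCost x (i + 1) (j + 1) = 0 := clusterCost_empty x (by omega)
    have e2 : clusterCost x i j = 0 := clusterCost_empty x (by omega)
    have e3 : clusterCost x (i + 1) j = 0 := clusterCost_empty x (by omega)
    have e4 : 0 ≤ clusterCost x i (j + 1) := clusterCost_nonneg x i (j + 1)
    linarith

/-- Column telescoping: left endpoint. -/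
lemma col (n : ℕ) (x : ℕ → ℝ)
    (hsort : ∀ ⦃p q : ℕ⦄, 1 ≤ p → p ≤ q → q ≤ n → x p ≤ x q)
    {u v j : ℕ} (hu : 1 ≤ u) (huv : u ≤ v) (hjn : j + 1 ≤ n) :
    clusterCost x v (j + 1) + clusterCost x u j
      ≤ clusterCost x u (j + 1) + clusterCost x v j := by
  induction v, huv using Nat.le_induction with
  | base => linarith
  | succ v hv ih =>
    have h := adjacent n x hsort (le_trans hu hv) hjn (i := v) (j := j)
    linarith

/-- For sorted reals `x_1 ≤ … ≤ x_n` and indices `u < v`, `a < b`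
(all between `1` and `n`), the concave (Monge) inequality holds:
`CC(v, b) + CC(u, a) ≤ CC(u, b) + CC(v, a)`. -/
theorem clusterCost_monge (n : ℕ) (x : ℕ → ℝ)
    (hsort : ∀ ⦃p q : ℕ⦄, 1 ≤ p → p ≤ q → q ≤ n → x p ≤ x q)
    (u v a b : ℕ) (hu : 1 ≤ u) (huv : u < v) (hvn : v ≤ n)
    (ha : 1 ≤ a) (hab : a < b) (hbn : b ≤ n) :
    clusterCost x v b + clusterCost x u a
      ≤ clusterCost x u b + clusterCost x v a := by
  have key : ∀ b', a ≤ b' → b' ≤ n →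
      clusterCost x v b' + clusterCost x u a
        ≤ clusterCost x u b' + clusterCost x v a := by
    intro b' hb'
    induction b', hb' using Nat.le_induction with
    | base => intro _; linarith
    | succ c hc ih =>
      intro hcn
      have ih' := ih (by omega)
      have h := col n x hsort hu huv.le (j := c) hcn
      linarith
  exact key b hab.le hbn
end

section
/- Let x_1 ≤ x_2 ≤ … ≤ x_n be real numbers, let u < v ≤ a ≤ n be indices, let μ_{v,a} be the arithmetic mean of x_v, …, x_a, and let c be any real number with μ_{v,a} ≤ c. Then ∑_{ℓ=u}^{v−1} (x_ℓ − c)² + CC(v, a) ≥ CC(u, a), where CC denotes the squared-distance cluster cost. -/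
/-! The mean `μ` of `x_v, …, x_a` minimizes the sum of squared deviations, so `CC(u, a)` is at
most the cost of serving all of `x_u, …, x_a` from `μ`, which splits as the cost of `x_u, …, x_{v-1}`
around `μ` plus `CC(v, a)`. Since the data are sorted, `x_u, …, x_{v-1}` all lie below `μ ≤ c`, so each
of them is closer to `μ` than to `c`. -/

open Finset

namespace Finset

variable {ι : Type*} (s : Finset ι) (f : ι → ℝ)

theorem sum_sub_sq_eq_sum_sub_mean_sq_add (m : ℝ) :
    ∑ i ∈ s, (f i - m) ^ 2 =
      ∑ i ∈ s, (f i - (∑ j ∈ s, f j) / #s) ^ 2 + #s * ((∑ j ∈ s, f j) / #s - m) ^ 2 := by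
  rcases s.eq_empty_or_nonempty with rfl | hs
  · simp
  set μ := (∑ j ∈ s, f j) / #s
  have hcard : (#s : ℝ) ≠ 0 := by exact_mod_cast hs.card_pos.ne'
  have hdev : ∑ i ∈ s, (f i - μ) = 0 := by
    rw [sum_sub_distrib, sum_const, nsmul_eq_mul, mul_div_cancel₀ _ hcard, sub_self]
  calc ∑ i ∈ s, (f i - m) ^ 2
      = ∑ i ∈ s, ((f i - μ) ^ 2 + 2 * (μ - m) * (f i - μ) + (μ - m) ^ 2) :=
        sum_congr rfl fun i _ => by ring
    _ = ∑ i ∈ s, (f i - μ) ^ 2 + #s * (μ - m) ^ 2 := by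
        rw [sum_add_distrib, sum_add_distrib, ← mul_sum, hdev, sum_const, nsmul_eq_mul]
        ring

theorem sum_sub_mean_sq_le (m : ℝ) :
    ∑ i ∈ s, (f i - (∑ j ∈ s, f j) / #s) ^ 2 ≤ ∑ i ∈ s, (f i - m) ^ 2 := by
  rw [sum_sub_sq_eq_sum_sub_mean_sq_add s f m]
  exact le_add_of_nonneg_right (by positivity)

variable {s f} in
theorem le_sum_div_card {y : ℝ} (hs : s.Nonempty) (h : ∀ i ∈ s, y ≤ f i) :
    y ≤ (∑ i ∈ s, f i) / #s := by
  rw [← expect_eq_sum_div_card]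
  exact le_expect hs h

theorem sum_Icc_consecutive {M : Type*} [AddCommMonoid M] (f : ℕ → M) {u v a : ℕ}
    (huv : u < v) (hva : v ≤ a + 1) :
    ∑ i ∈ Icc u a, f i = ∑ i ∈ Icc u (v - 1), f i + ∑ i ∈ Icc v a, f i := by
  rw [← sum_union]
  · congr 1; ext; simp only [mem_union, mem_Icc]; omega
  · rw [disjoint_left]; intro; simp only [mem_Icc]; omega

end Finset

theorem sq_sub_le_sq_sub_of_le_of_le {y μ c : ℝ} (hy : y ≤ μ) (hc : μ ≤ c) :
    (y - μ) ^ 2 ≤ (y - c) ^ 2 := by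
  nlinarith

/-- For sorted reals `x_1 ≤ … ≤ x_n`, indices `u < v ≤ a ≤ n`, and
any real `c` with `μ_{v,a} ≤ c` (where `μ_{v,a}` is the mean of `x_v, …, x_a`),
we have `∑_{ℓ=u}^{v−1} (x_ℓ − c)² + CC(v, a) ≥ CC(u, a)`. -/
theorem clusterCost_shift_centroid (n : ℕ) (x : ℕ → ℝ)
    (hsort : ∀ ⦃p q : ℕ⦄, 1 ≤ p → p ≤ q → q ≤ n → x p ≤ x q)
    (u v a : ℕ) (hu : 1 ≤ u) (huv : u < v) (hva : v ≤ a) (han : a ≤ n)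
    (c : ℝ) (hc : (∑ t ∈ Finset.Icc v a, x t) / ((Finset.Icc v a).card : ℝ) ≤ c) :
    (∑ ℓ ∈ Finset.Icc u (v - 1), (x ℓ - c) ^ 2) + clusterCost x v a
      ≥ clusterCost x u a := by
  set μ := (∑ t ∈ Icc v a, x t) / #(Icc v a)
  have hbelow : ∀ ℓ ∈ Icc u (v - 1), x ℓ ≤ μ := fun ℓ hℓ =>
    le_sum_div_card (nonempty_Icc.2 hva) fun t ht => by
      rw [mem_Icc] at hℓ ht
      exact hsort (hu.trans hℓ.1) (by omega) (ht.2.trans han)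
  calc clusterCost x u a
      ≤ ∑ ℓ ∈ Icc u a, (x ℓ - μ) ^ 2 := sum_sub_mean_sq_le _ x μ
    _ = ∑ ℓ ∈ Icc u (v - 1), (x ℓ - μ) ^ 2 + clusterCost x v a :=
        sum_Icc_consecutive _ huv (by omega)
    _ ≤ ∑ ℓ ∈ Icc u (v - 1), (x ℓ - c) ^ 2 + clusterCost x v a :=
        add_le_add_left (sum_le_sum fun ℓ hℓ => sq_sub_le_sq_sub_of_le_of_le (hbelow ℓ hℓ) hc) _
end

section
/- Let x_1 ≤ x_2 ≤ … ≤ x_n be real numbers and let i ≥ 2. For each m, let T_i(m) be the smallest index j ∈ {1, …, m} minimizing D_{i−1}(j−1) + CC(j, m), i.e. the leftmost optimal starting index of the last cluster in an optimal partition of x_1, …, x_m into i consecutive groups. Then T_i is nondecreasing: for all a < b, T_i(a) ≤ T_i(b). -/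
/-- `kCost x i m` is the minimum cost of partitioning `x_1, …, x_m` into at most
`i` consecutive groups, each charged its squared-distance cluster cost
(`kCost x i 0 = 0`). -/
noncomputable def kCost (x : ℕ → ℝ) (i m : ℕ) : ℝ :=
  sInf { c : ℝ | ∃ b : ℕ → ℕ, Monotone b ∧ b 0 = 0 ∧ b i = m ∧
    c = ∑ t ∈ Finset.range i, clusterCost x (b t + 1) (b (t + 1)) }

open Finset

lemma cc_closed (x : ℕ → ℝ) (i j : ℕ) :
    clusterCost x i j = (∑ ℓ ∈ Icc i j, (x ℓ)^2)
      - (∑ ℓ ∈ Icc i j, x ℓ)^2 / ((Icc i j).card : ℝ) := by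
  unfold clusterCost
  rcases Nat.eq_zero_or_pos (Icc i j).card with h | h
  · rw [card_eq_zero] at h; simp [h]
  · have hc : ((Icc i j).card : ℝ) ≠ 0 := by positivity
    set A := ∑ t ∈ Icc i j, x t with hA
    set c := ((Icc i j).card : ℝ) with hcdef
    have he : ∑ ℓ ∈ Icc i j, (x ℓ - A / c)^2
        = ∑ ℓ ∈ Icc i j, ((x ℓ)^2 - 2*(A/c)*x ℓ + (A/c)^2) := by
      apply sum_congr rfl; intros; ring
    rw [he, sum_add_distrib, sum_sub_distrib, ← mul_sum, sum_const, nsmul_eq_mul, ← hA, ← hcdef]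
    field_simp
    ring

lemma cc_step (x : ℕ → ℝ) (i m : ℕ) (h : i ≤ m + 1) :
    clusterCost x i (m+1) = clusterCost x i m
      + (((Icc i m).card : ℝ) / (((Icc i m).card : ℝ) + 1))
        * (x (m+1) - (∑ t ∈ Icc i m, x t) / ((Icc i m).card : ℝ))^2 := by
  have hins : Icc i (m+1) = insert (m+1) (Icc i m) := (Finset.insert_Icc_right_eq_Icc_add_one h).symm
  have hnot : m + 1 ∉ Icc i m := by simp
  have hcard : ((Icc i (m+1)).card : ℝ) = ((Icc i m).card : ℝ) + 1 := by
    rw [hins, card_insert_of_notMem hnot]; push_cast; ring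
  have hsum : ∀ f : ℕ → ℝ, ∑ t ∈ Icc i (m+1), f t = f (m+1) + ∑ t ∈ Icc i m, f t := by
    intro f; rw [hins, sum_insert hnot]
  rw [cc_closed, cc_closed, hcard, hsum, hsum]
  set A := ∑ t ∈ Icc i m, x t with hA
  set c := ((Icc i m).card : ℝ) with hcdef
  set y := x (m+1)
  rcases Nat.eq_zero_or_pos (Icc i m).card with h0 | h0
  · have hAe : A = 0 := by rw [hA, card_eq_zero.mp h0]; simp
    have hce : c = 0 := by rw [hcdef, h0]; simp
    rw [hAe, hce]; simp
  · have hc : c ≠ 0 := by rw [hcdef]; positivity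
    have hc1 : c + 1 ≠ 0 := by rw [hcdef]; positivity
    field_simp
    ring

section
variable {n : ℕ} {x : ℕ → ℝ}
  (hsort : ∀ ⦃p q : ℕ⦄, 1 ≤ p → p ≤ q → q ≤ n → x p ≤ x q)

include hsort

lemma mean_le_right {i m q : ℕ} (h1 : 1 ≤ i) (him : i ≤ m) (h2 : m ≤ q) (h3 : q ≤ n) :
    (∑ t ∈ Icc i m, x t) / ((Icc i m).card : ℝ) ≤ x q := by
  have hc : (0:ℝ) < ((Icc i m).card : ℝ) := by
    have : 0 < (Icc i m).card := by rw [Nat.card_Icc]; omega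
    positivity
  rw [div_le_iff₀ hc]
  have h : ∑ t ∈ Icc i m, x t ≤ ∑ t ∈ Icc i m, x q := by
    apply sum_le_sum
    intro t ht
    simp only [mem_Icc] at ht
    exact hsort (le_trans h1 ht.1) (le_trans ht.2 h2) h3
  simpa [mul_comm] using h

lemma mean_mono {j k m : ℕ} (h1 : 1 ≤ j) (hjk : j ≤ k) (hkm : k ≤ m) (hmn : m ≤ n) :
    (∑ t ∈ Icc j m, x t) / ((Icc j m).card : ℝ)
      ≤ (∑ t ∈ Icc k m, x t) / ((Icc k m).card : ℝ) := by
  have hck : (0:ℝ) < ((Icc k m).card : ℝ) := by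
    have : 0 < (Icc k m).card := by rw [Nat.card_Icc]; omega
    positivity
  have hcj : (0:ℝ) < ((Icc j m).card : ℝ) := by
    have : 0 < (Icc j m).card := by rw [Nat.card_Icc]; omega
    positivity
  rw [div_le_div_iff₀ hcj hck]
  have hsplit : ∑ t ∈ Icc j m, x t = (∑ t ∈ Ico j k, x t) + ∑ t ∈ Icc k m, x t := by
    rw [← Finset.Ico_add_one_right_eq_Icc, ← Finset.Ico_add_one_right_eq_Icc,
       ← Finset.sum_Ico_consecutive _ hjk (by omega : k ≤ m + 1)]
  have hB : ∑ t ∈ Ico j k, x t ≤ ((Ico j k).card : ℝ) * x k := by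
    calc ∑ t ∈ Ico j k, x t ≤ ∑ t ∈ Ico j k, x k := by
          apply sum_le_sum
          intro t ht
          simp only [mem_Ico] at ht
          exact hsort (le_trans h1 ht.1) (le_of_lt ht.2) (le_trans hkm hmn)
      _ = ((Ico j k).card : ℝ) * x k := by rw [sum_const, nsmul_eq_mul]
  have hAk : ((Icc k m).card : ℝ) * x k ≤ ∑ t ∈ Icc k m, x t := by
    calc ((Icc k m).card : ℝ) * x k = ∑ t ∈ Icc k m, x k := by rw [sum_const, nsmul_eq_mul]
      _ ≤ ∑ t ∈ Icc k m, x t := by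
          apply sum_le_sum
          intro t ht
          simp only [mem_Icc] at ht
          exact hsort (le_trans h1 hjk) ht.1 (le_trans ht.2 hmn)
  have hn : (Icc j m).card = (Ico j k).card + (Icc k m).card := by
    rw [Nat.card_Icc, Nat.card_Icc, Nat.card_Ico]; omega
  have hcards : ((Icc j m).card : ℝ) = ((Ico j k).card : ℝ) + ((Icc k m).card : ℝ) := by
    rw [hn]; push_cast; ring
  have hc' : (0:ℝ) ≤ ((Ico j k).card : ℝ) := by positivity
  rw [hsplit, hcards]
  nlinarith [hck.le]


lemma incr_compare {j k m : ℕ} (h1 : 1 ≤ j) (hjk : j ≤ k) (hkm : k ≤ m + 1)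
    (hmn : m + 1 ≤ n) :
    clusterCost x k (m+1) - clusterCost x k m
      ≤ clusterCost x j (m+1) - clusterCost x j m := by
  rw [cc_step x j m (by omega), cc_step x k m hkm]
  have key : (((Icc k m).card : ℝ) / (((Icc k m).card : ℝ) + 1))
        * (x (m+1) - (∑ t ∈ Icc k m, x t) / ((Icc k m).card : ℝ))^2
      ≤ (((Icc j m).card : ℝ) / (((Icc j m).card : ℝ) + 1))
        * (x (m+1) - (∑ t ∈ Icc j m, x t) / ((Icc j m).card : ℝ))^2 := by
    rcases Nat.lt_or_ge m k with hk | hk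
    · have hce : (Icc k m).card = 0 := by rw [Nat.card_Icc]; omega
      rw [hce]
      push_cast
      rw [zero_div, zero_mul]
      positivity
    · have hckn : 0 < (Icc k m).card := by rw [Nat.card_Icc]; omega
      have hck : (0:ℝ) < ((Icc k m).card : ℝ) := by positivity
      have hcj : (0:ℝ) < ((Icc j m).card : ℝ) := by
        have : 0 < (Icc j m).card := by rw [Nat.card_Icc]; omega
        positivity
      set μj := (∑ t ∈ Icc j m, x t) / ((Icc j m).card : ℝ)
      set μk := (∑ t ∈ Icc k m, x t) / ((Icc k m).card : ℝ)
      have hμ : μj ≤ μk := mean_mono hsort h1 hjk hk (by omega)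
      have hμy : μk ≤ x (m+1) := mean_le_right hsort (le_trans h1 hjk) hk (by omega) hmn
      have hr : ((Icc k m).card : ℝ) / (((Icc k m).card : ℝ) + 1)
          ≤ ((Icc j m).card : ℝ) / (((Icc j m).card : ℝ) + 1) := by
        rw [div_le_div_iff₀ (by linarith) (by linarith)]
        have : ((Icc k m).card : ℝ) ≤ ((Icc j m).card : ℝ) := by
          have : (Icc k m).card ≤ (Icc j m).card := by
            rw [Nat.card_Icc, Nat.card_Icc]; omega
          exact_mod_cast this
        nlinarith
      have hs : (x (m+1) - μk)^2 ≤ (x (m+1) - μj)^2 := by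
        apply pow_le_pow_left₀ (by linarith) (by linarith)
      exact mul_le_mul hr hs (by positivity) (by positivity)
  linarith

lemma quadrangle {j k a b : ℕ} (h1 : 1 ≤ j) (hjk : j ≤ k) (hka : k ≤ a)
    (hab : a ≤ b) (hbn : b ≤ n) :
    clusterCost x j a + clusterCost x k b ≤ clusterCost x j b + clusterCost x k a := by
  induction b, hab using Nat.le_induction with
  | base => linarith
  | succ m hm ih =>
    have h1' := ih (by omega)
    have h2' := incr_compare (m := m) hsort h1 hjk (by omega) (by omega)
    linarith

end

/-- For sorted reals `x_1 ≤ … ≤ x_n` and `i ≥ 2`, let `T m` be the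
smallest `j ∈ {1, …, m}` minimizing `D_{i−1}(j−1) + CC(j, m)` (the leftmost
optimal starting index of the last cluster).  Then `T` is nondecreasing on
`{1, …, n}`. -/
theorem leftmost_minimizer_monotone (n i : ℕ) (x : ℕ → ℝ)
    (hsort : ∀ ⦃p q : ℕ⦄, 1 ≤ p → p ≤ q → q ≤ n → x p ≤ x q)
    (hi : 2 ≤ i) (T : ℕ → ℕ)
    (hT : ∀ m, 1 ≤ m → m ≤ n →
      T m ∈ Finset.Icc 1 m ∧
      (∀ j ∈ Finset.Icc 1 m,
        kCost x (i - 1) (T m - 1) + clusterCost x (T m) m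
          ≤ kCost x (i - 1) (j - 1) + clusterCost x j m) ∧
      (∀ j ∈ Finset.Icc 1 m,
        (∀ j' ∈ Finset.Icc 1 m,
          kCost x (i - 1) (j - 1) + clusterCost x j m
            ≤ kCost x (i - 1) (j' - 1) + clusterCost x j' m) →
        T m ≤ j)) :
    ∀ a b : ℕ, 1 ≤ a → a < b → b ≤ n → T a ≤ T b := by
  intro a b ha hab hbn
  by_contra hcon
  push_neg at hcon
  set j := T b with hj
  set k := T a with hk
  obtain ⟨hTa_mem, hTa_min, hTa_left⟩ := hT a ha (by omega)
  obtain ⟨hTb_mem, hTb_min, _⟩ := hT b (by omega) hbn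
  simp only [Finset.mem_Icc] at hTa_mem hTb_mem
  have hjk : j < k := hcon
  have h1j : 1 ≤ j := hTb_mem.1
  have hka : k ≤ a := hTa_mem.2
  -- optimality of j at b, tested against k
  have hoptb : kCost x (i-1) (j-1) + clusterCost x j b
      ≤ kCost x (i-1) (k-1) + clusterCost x k b :=
    hTb_min k (Finset.mem_Icc.mpr ⟨hTa_mem.1, by omega⟩)
  -- quadrangle inequality
  have hq : clusterCost x j a + clusterCost x k b
      ≤ clusterCost x j b + clusterCost x k a :=
    quadrangle hsort h1j (le_of_lt hjk) hka (le_of_lt hab) hbn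
  -- hence j is also optimal at a
  have hopta : kCost x (i-1) (j-1) + clusterCost x j a
      ≤ kCost x (i-1) (k-1) + clusterCost x k a := by linarith
  have hjmin : ∀ j' ∈ Finset.Icc 1 a,
      kCost x (i-1) (j-1) + clusterCost x j a
        ≤ kCost x (i-1) (j'-1) + clusterCost x j' a := by
    intro j' hj'
    calc kCost x (i-1) (j-1) + clusterCost x j a
        ≤ kCost x (i-1) (k-1) + clusterCost x k a := hopta
      _ ≤ kCost x (i-1) (j'-1) + clusterCost x j' a := hTa_min j' hj'
  have : k ≤ j := hTa_left j (Finset.mem_Icc.mpr ⟨h1j, by omega⟩) hjmin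
  omega
end

section
/- Let x_1 ≤ x_2 ≤ … ≤ x_n be real numbers and k ≥ 2. Let D_i(m) denote the minimum cost of partitioning x_1, …, x_m into at most i consecutive groups (squared-distance cluster costs), and let D̃_i(m) denote the minimum cost of partitioning the suffix x_m, …, x_n into at most i consecutive groups. Then the optimal k-cluster cost splits at the middle: D_k(n) = min_{0 ≤ j ≤ n} ( D_{⌊k/2⌋}(j) + D̃_{k−⌊k/2⌋}(j+1) ), where D_{⌊k/2⌋}(0) = 0 and D̃_{k−⌊k/2⌋}(n+1) = 0. -/
/-- `kCostSuffix x n i m` is the minimum cost of partitioning the suffix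
`x_m, …, x_n` into at most `i` consecutive groups, each charged its
squared-distance cluster cost (`kCostSuffix x n i (n+1) = 0`). -/
noncomputable def kCostSuffix (x : ℕ → ℝ) (n i m : ℕ) : ℝ :=
  sInf { c : ℝ | ∃ b : ℕ → ℕ, Monotone b ∧ b 0 = m - 1 ∧ b i = n ∧
    c = ∑ t ∈ Finset.range i, clusterCost x (b t + 1) (b (t + 1)) }

/-!
A partition of `x_{lo+1}, …, x_hi` into `p + q` consecutive groups is given by monotone
boundaries `b 0 = lo ≤ b 1 ≤ … ≤ b (p + q) = hi`; cutting it at the boundary `b p` yields a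
partition into `p` groups followed by one into `q` groups, and conversely two such partitions
that meet at a common boundary concatenate. So the set of attainable costs for `p + q` groups
is the union over the middle boundary of the sumsets of the attainable costs for `p` and for
`q` groups, and the infimum of a sumset is the sum of the infima.
-/

open Finset

/-- The costs of all partitions of `x_{lo+1}, …, x_hi` into at most `i` consecutive groups. -/
noncomputable def partitionCosts (x : ℕ → ℝ) (i lo hi : ℕ) : Set ℝ :=
  { c : ℝ | ∃ b : ℕ → ℕ, Monotone b ∧ b 0 = lo ∧ b i = hi ∧
    c = ∑ t ∈ range i, clusterCost x (b t + 1) (b (t + 1)) }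

section partitionCosts

variable (x : ℕ → ℝ)

lemma partitionCosts_bddBelow (i lo hi : ℕ) : BddBelow (partitionCosts x i lo hi) := by
  refine ⟨0, ?_⟩
  rintro c ⟨b, -, -, -, rfl⟩
  exact sum_nonneg fun _ _ => sum_nonneg fun _ _ => sq_nonneg _

lemma partitionCosts_nonempty {i lo hi : ℕ} (hi0 : i ≠ 0) (hlo : lo ≤ hi) :
    (partitionCosts x i lo hi).Nonempty := by
  refine ⟨_, fun t => if t = 0 then lo else hi, ?_, if_pos rfl, if_neg hi0, rfl⟩
  intro s t hst
  dsimp only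
  split_ifs <;> omega

lemma add_mem_partitionCosts {p q lo mid hi : ℕ} {c₁ c₂ : ℝ}
    (h₁ : c₁ ∈ partitionCosts x p lo mid) (h₂ : c₂ ∈ partitionCosts x q mid hi) :
    c₁ + c₂ ∈ partitionCosts x (p + q) lo hi := by
  obtain ⟨b₁, hb₁, hb₁0, hb₁p, rfl⟩ := h₁
  obtain ⟨b₂, hb₂, hb₂0, hb₂q, rfl⟩ := h₂
  set b : ℕ → ℕ := fun t => if t ≤ p then b₁ t else b₂ (t - p) with hb
  have hb_shift : ∀ t, b (p + t) = b₂ t := by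
    intro t
    rcases Nat.eq_zero_or_pos t with rfl | ht
    · simp [hb, hb₁p, hb₂0]
    · simp [hb, show ¬ p + t ≤ p by omega]
  have hb_mono : Monotone b := by
    intro s t hst
    simp only [hb]
    split_ifs with hs ht ht
    · exact hb₁ hst
    · calc b₁ s ≤ b₁ p := hb₁ hs
        _ = b₂ 0 := hb₁p.trans hb₂0.symm
        _ ≤ b₂ (t - p) := hb₂ (Nat.zero_le _)
    · omega
    · exact hb₂ (by omega)
  refine ⟨b, hb_mono, by simp [hb, hb₁0], by rw [hb_shift, hb₂q], ?_⟩
  rw [sum_range_add]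
  congr 1
  · refine sum_congr rfl fun t ht => ?_
    have ht : t < p := mem_range.mp ht
    simp [hb, ht.le, show t + 1 ≤ p by omega]
  · refine sum_congr rfl fun t _ => ?_
    rw [hb_shift, add_assoc, hb_shift]

lemma exists_add_of_mem_partitionCosts {p q lo hi : ℕ} {c : ℝ}
    (hc : c ∈ partitionCosts x (p + q) lo hi) :
    ∃ mid ∈ Icc lo hi, ∃ c₁ ∈ partitionCosts x p lo mid, ∃ c₂ ∈ partitionCosts x q mid hi,
      c = c₁ + c₂ := by
  obtain ⟨b, hb, hb0, hbpq, rfl⟩ := hc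
  have hmid : b p ∈ Icc lo hi :=
    mem_Icc.mpr ⟨hb0 ▸ hb (Nat.zero_le p), hbpq ▸ hb (Nat.le_add_right p q)⟩
  refine ⟨b p, hmid, _, ⟨b, hb, hb0, rfl, rfl⟩,
    _, ⟨fun t => b (p + t), fun s t hst => hb (by omega), rfl, hbpq, rfl⟩, ?_⟩
  simp only [sum_range_add, add_assoc]

theorem sInf_partitionCosts_add {p q lo hi : ℕ} (hp : p ≠ 0) (hq : q ≠ 0) (hlo : lo ≤ hi) :
    sInf (partitionCosts x (p + q) lo hi)
      = (Icc lo hi).inf' ⟨lo, left_mem_Icc.mpr hlo⟩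
          (fun mid => sInf (partitionCosts x p lo mid) + sInf (partitionCosts x q mid hi)) := by
  have hbdd := partitionCosts_bddBelow x
  refine le_antisymm ((le_inf'_iff _ _).mpr fun mid hmid => ?_) ?_
  · obtain ⟨hlo_mid, hmid_hi⟩ := mem_Icc.mp hmid
    have hne₁ := partitionCosts_nonempty x hp hlo_mid
    have hne₂ := partitionCosts_nonempty x hq hmid_hi
    rw [← csInf_add hne₁ (hbdd _ _ _) hne₂ (hbdd _ _ _)]
    refine csInf_le_csInf (hbdd _ _ _) (hne₁.add hne₂) ?_
    rintro _ ⟨c₁, hc₁, c₂, hc₂, rfl⟩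
    exact add_mem_partitionCosts x hc₁ hc₂
  · refine le_csInf (partitionCosts_nonempty x (by omega) hlo) fun c hc => ?_
    obtain ⟨mid, hmid, c₁, hc₁, c₂, hc₂, rfl⟩ := exists_add_of_mem_partitionCosts x hc
    exact (inf'_le _ hmid).trans
      (add_le_add (csInf_le (hbdd _ _ _) hc₁) (csInf_le (hbdd _ _ _) hc₂))

end partitionCosts

/-- For sorted reals `x_1 ≤ … ≤ x_n` and `k ≥ 2`, the optimal
`k`-cluster cost splits at the middle:
`D_k(n) = min_{0 ≤ j ≤ n} ( D_{⌊k/2⌋}(j) + D̃_{k−⌊k/2⌋}(j+1) )`. -/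
theorem kCost_split_at_middle (n k : ℕ) (x : ℕ → ℝ)
    (hk : 2 ≤ k) :
    kCost x k n
      = (Finset.Icc 0 n).inf' ⟨0, by simp⟩
          (fun j => kCost x (k / 2) j + kCostSuffix x n (k - k / 2) (j + 1)) := by
  have h := sInf_partitionCosts_add x (p := k / 2) (q := k - k / 2) (by omega) (by omega)
    (Nat.zero_le n)
  -- `kCost x i m` and `kCostSuffix x n i (j + 1)` are definitionally
  -- `sInf (partitionCosts x i 0 m)` and `sInf (partitionCosts x i j n)`
  rwa [show k / 2 + (k - k / 2) = k by omega] at h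
end

section
/- Let C > 0 be a real constant and let F : ℕ × ℕ → ℝ be a function satisfying F(n, 1) ≤ C·n for all n ≥ 0, and, for all k ≥ 2 and all n ≥ 0, F(n, k) ≤ max_{0 ≤ j ≤ n} ( F(j, ⌊k/2⌋) + F(n − j, k − ⌊k/2⌋) ) + C·n·k. Then F(n, k) ≤ 3·C·k·n for all n ≥ 0 and k ≥ 1. -/
/-! The bound `3·C·k·n` is preserved by one level of the recursion: the two halves cost at most
`3·C·⌈k/2⌉·n` together, and since `⌈k/2⌉ ≤ 2k/3` for `k ≥ 2`, adding `C·n·k` stays below `3·C·k·n`. -/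

theorem Nat.three_mul_sub_div_two_le_two_mul {k : ℕ} (hk : 2 ≤ k) : 3 * (k - k / 2) ≤ 2 * k := by
  omega

lemma mul_add_mul_sub_le {c a b x y : ℝ} (hc : 0 ≤ c) (hab : a ≤ b) (hx : 0 ≤ x) :
    c * a * x + c * b * (y - x) ≤ c * b * y := by
  have : 0 ≤ c * (b - a) * x := mul_nonneg (mul_nonneg hc (sub_nonneg.2 hab)) hx
  linarith

lemma sup'_add_sub_le {G H : ℕ → ℝ} {c : ℝ} {a b : ℕ} (n : ℕ) (hc : 0 ≤ c) (hab : a ≤ b)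
    (hG : ∀ m, G m ≤ c * a * m) (hH : ∀ m, H m ≤ c * b * m) :
    (Finset.Icc 0 n).sup' ⟨0, by simp⟩ (fun j => G j + H (n - j)) ≤ c * b * n := by
  refine Finset.sup'_le _ _ fun j hj => ?_
  have hjn : j ≤ n := (Finset.mem_Icc.mp hj).2
  calc G j + H (n - j) ≤ c * a * j + c * b * (n - j : ℕ) := add_le_add (hG j) (hH (n - j))
    _ = c * a * j + c * b * (n - j : ℝ) := by rw [Nat.cast_sub hjn]
    _ ≤ c * b * n := mul_add_mul_sub_le hc (by exact_mod_cast hab) j.cast_nonneg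

/-- If `C > 0` and `F : ℕ × ℕ → ℝ` satisfies `F(n, 1) ≤ C·n` for
all `n ≥ 0` and, for all `k ≥ 2` and `n ≥ 0`,
`F(n, k) ≤ max_{0 ≤ j ≤ n} ( F(j, ⌊k/2⌋) + F(n − j, k − ⌊k/2⌋) ) + C·n·k`,
then `F(n, k) ≤ 3·C·k·n` for all `n ≥ 0` and `k ≥ 1`. -/
theorem divide_and_conquer_time_bound (C : ℝ) (hC : 0 < C) (F : ℕ × ℕ → ℝ)
    (hbase : ∀ n : ℕ, F (n, 1) ≤ C * n)
    (hrec : ∀ n k : ℕ, 2 ≤ k →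
      F (n, k) ≤ (Finset.Icc 0 n).sup' ⟨0, by simp⟩
          (fun j => F (j, k / 2) + F (n - j, k - k / 2)) + C * n * k) :
    ∀ n k : ℕ, 1 ≤ k → F (n, k) ≤ 3 * C * k * n := by
  intro n k hk
  induction k using Nat.strong_induction_on generalizing n with
  | _ k ih =>
    have hCn : 0 ≤ C * n := mul_nonneg hC.le n.cast_nonneg
    obtain rfl | hk2 : k = 1 ∨ 2 ≤ k := by omega
    · have := hbase n
      push_cast
      linarith
    have hhalves := sup'_add_sub_le n (by positivity : 0 ≤ 3 * C) (by omega)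
      (fun m => ih (k / 2) (by omega) m (by omega))
      (fun m => ih (k - k / 2) (by omega) m (by omega))
    have hceil : 3 * ((k - k / 2 : ℕ) : ℝ) ≤ 2 * k := by
      exact_mod_cast Nat.three_mul_sub_div_two_le_two_mul hk2
    calc F (n, k) ≤ 3 * C * (k - k / 2 : ℕ) * n + C * n * k := by linarith [hrec n k hk2]
      _ ≤ 3 * C * k * n := by linarith [mul_le_mul_of_nonneg_left hceil hCn]
end

section
/- Let f : ℝ → ℝ be differentiable and strictly convex with Bregman divergence D_f(x, y) = f(x) − f(y) − f'(y)(x − y), and let x_1, …, x_n be real numbers (n ≥ 1) with arithmetic mean μ = (1/n) ∑_{ℓ=1}^{n} x_ℓ. Then for every real c, ∑_{ℓ=1}^{n} D_f(x_ℓ, μ) ≤ ∑_{ℓ=1}^{n} D_f(x_ℓ, c), with equality if and only if c = μ. That is, the arithmetic mean is the unique minimizer of the summed Bregman divergence to a multiset of points. -/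
/-- The Bregman divergence induced by `f`: `D_f(x, y) = f x − f y − f'(y)(x − y)`. -/
noncomputable def bregman (f : ℝ → ℝ) (x y : ℝ) : ℝ :=
  f x - f y - deriv f y * (x - y)

/-!
Bregman divergences satisfy the three-point identity
`D(a, c) = D(a, b) + D(b, c) + (f'(b) − f'(c))(a − b)`. Taking `b = μ` and summing over
`a = x_ℓ`, the cross term vanishes because the deviations from the mean sum to zero, so
`∑ D(x_ℓ, c) = ∑ D(x_ℓ, μ) + n · D(μ, c)`. Strict convexity makes `D(μ, c)` nonnegative and
zero only at `c = μ`.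
-/

open Finset

section Bregman

variable {f : ℝ → ℝ}

@[simp]
lemma bregman_self (f : ℝ → ℝ) (a : ℝ) : bregman f a a = 0 := by
  simp [bregman]

lemma bregman_three_point (f : ℝ → ℝ) (a b c : ℝ) :
    bregman f a c = bregman f a b + bregman f b c + (deriv f b - deriv f c) * (a - b) := by
  unfold bregman
  ring

lemma StrictConvexOn.bregman_pos {s : Set ℝ} (hf : StrictConvexOn ℝ s f) {a b : ℝ}
    (ha : a ∈ s) (hb : b ∈ s) (hfb : DifferentiableAt ℝ f b) (hab : a ≠ b) :
    0 < bregman f a b := by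
  unfold bregman
  rcases hab.lt_or_gt with hlt | hgt
  · have hslope := hf.slope_lt_deriv ha hb hlt hfb
    rw [slope_def_field, div_lt_iff₀ (sub_pos.mpr hlt)] at hslope
    nlinarith
  · have hslope := hf.deriv_lt_slope hb ha hgt hfb
    rw [slope_def_field, lt_div_iff₀ (sub_pos.mpr hgt)] at hslope
    nlinarith

lemma StrictConvexOn.bregman_nonneg {s : Set ℝ} (hf : StrictConvexOn ℝ s f) {a b : ℝ}
    (ha : a ∈ s) (hb : b ∈ s) (hfb : DifferentiableAt ℝ f b) :
    0 ≤ bregman f a b := by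
  rcases eq_or_ne a b with rfl | hab
  · simp
  · exact (hf.bregman_pos ha hb hfb hab).le

lemma StrictConvexOn.bregman_eq_zero_iff {s : Set ℝ} (hf : StrictConvexOn ℝ s f) {a b : ℝ}
    (ha : a ∈ s) (hb : b ∈ s) (hfb : DifferentiableAt ℝ f b) :
    bregman f a b = 0 ↔ a = b := by
  refine ⟨fun h => ?_, fun h => h ▸ bregman_self f a⟩
  by_contra hab
  exact (hf.bregman_pos ha hb hfb hab).ne' h

lemma sum_bregman_eq_sum_bregman_mean_add {ι : Type*} (f : ℝ → ℝ) (s : Finset ι)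
    (x : ι → ℝ) {μ : ℝ} (hμ : #s * μ = ∑ i ∈ s, x i) (c : ℝ) :
    ∑ i ∈ s, bregman f (x i) c = ∑ i ∈ s, bregman f (x i) μ + #s * bregman f μ c := by
  have hdev : ∑ i ∈ s, (x i - μ) = 0 := by
    rw [sum_sub_distrib, sum_const, nsmul_eq_mul, hμ, sub_self]
  simp_rw [bregman_three_point f (x _) μ c, sum_add_distrib, ← mul_sum, hdev, mul_zero,
    add_zero, sum_const, nsmul_eq_mul]

end Bregman

/-- for a differentiable strictly convex `f : ℝ → ℝ` and reals
`x_1, …, x_n` (`n ≥ 1`) with arithmetic mean `μ`, for every real `c` we have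
`∑_{ℓ=1}^{n} D_f(x_ℓ, μ) ≤ ∑_{ℓ=1}^{n} D_f(x_ℓ, c)`, with equality iff `c = μ`:
the mean is the unique minimizer of the summed Bregman divergence. -/
theorem bregman_mean_unique_minimizer (f : ℝ → ℝ) (hdiff : Differentiable ℝ f)
    (hconv : StrictConvexOn ℝ Set.univ f) (n : ℕ) (hn : 1 ≤ n) (x : ℕ → ℝ)
    (μ : ℝ) (hμ : μ = (∑ ℓ ∈ Finset.Icc 1 n, x ℓ) / (n : ℝ)) (c : ℝ) :
    (∑ ℓ ∈ Finset.Icc 1 n, bregman f (x ℓ) μ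
        ≤ ∑ ℓ ∈ Finset.Icc 1 n, bregman f (x ℓ) c) ∧
    ((∑ ℓ ∈ Finset.Icc 1 n, bregman f (x ℓ) μ
        = ∑ ℓ ∈ Finset.Icc 1 n, bregman f (x ℓ) c) ↔ c = μ) := by
  have hn₀ : (0 : ℝ) < n := by exact_mod_cast hn
  have hcard : (#(Icc 1 n) : ℝ) * μ = ∑ ℓ ∈ Icc 1 n, x ℓ := by
    rw [Nat.card_Icc, Nat.add_sub_cancel, hμ, mul_div_cancel₀ _ hn₀.ne']
  rw [sum_bregman_eq_sum_bregman_mean_add f _ x hcard c, Nat.card_Icc, Nat.add_sub_cancel]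
  have hnonneg := hconv.bregman_nonneg (Set.mem_univ μ) (Set.mem_univ c) (hdiff c)
  refine ⟨le_add_of_nonneg_right (mul_nonneg hn₀.le hnonneg), ?_⟩
  rw [left_eq_add, mul_eq_zero, or_iff_right hn₀.ne',
    hconv.bregman_eq_zero_iff (Set.mem_univ μ) (Set.mem_univ c) (hdiff c), eq_comm]
end

section
/- Let f : ℝ → ℝ be differentiable and strictly convex, and let x_1 ≤ x_2 ≤ … ≤ x_n be real numbers. Define the Bregman cluster cost CC_f(i,j) = ∑_{ℓ=i}^{j} D_f(x_ℓ, μ_{i,j}) for i ≤ j, where D_f(x,y) = f(x) − f(y) − f'(y)(x−y) and μ_{i,j} is the arithmetic mean of x_i, …, x_j, with the convention CC_f(i,j) = 0 when i > j. Then for all indices u < v and a < b, the concave (Monge) inequality holds: CC_f(v, b) + CC_f(u, a) ≤ CC_f(u, b) + CC_f(v, a). -/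
/-- The Bregman cluster cost of grouping `x_i, …, x_j` into one cluster with the
optimal centroid (the arithmetic mean); `0` when `i > j`. -/
noncomputable def bregmanClusterCost (f : ℝ → ℝ) (x : ℕ → ℝ) (i j : ℕ) : ℝ :=
  ∑ ℓ ∈ Finset.Icc i j,
    bregman f (x ℓ) ((∑ t ∈ Finset.Icc i j, x t) / ((Finset.Icc i j).card : ℝ))

/-!
The cost of `[i, j]` is `∑ ℓ, f (x ℓ) - #[i, j] * f μ` with `μ` the mean, since the linear term of
the divergence sums to zero at the mean. For overlapping intervals the sums of `f (x ℓ)` on the two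
sides of the Monge inequality agree, and what remains compares `#U f μ_U + #I f μ_I` with
`#A f μ_A + #B f μ_B` for `U = [u, b]`, `I = [v, a]`, `A = [v, b]`, `B = [u, a]`. Both sides have
the same total weight and moment, and sortedness puts `μ_U, μ_I` between `μ_B` and `μ_A`, so
convexity of `f` (through its chord on `[μ_B, μ_A]`) gives the inequality. For disjoint intervals
the same chord argument shows that splitting an interval does not increase the cost, which also
makes the cost monotone under inclusion of intervals; these two facts give the inequality.
-/

open Finset
open scoped BigOperators

section Convex

variable {f : ℝ → ℝ} {s : Set ℝ}

lemma ConvexOn.sub_mul_map_le (hf : ConvexOn ℝ s f) {β α z : ℝ} (hβ : β ∈ s) (hα : α ∈ s)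
    (hz : z ∈ Set.Icc β α) :
    (α - β) * f z ≤ (z - β) * f α + (α - z) * f β := by
  obtain ⟨hβz, hzα⟩ := hz
  rcases hβz.trans hzα |>.eq_or_lt with rfl | hβα
  · obtain rfl : z = β := le_antisymm hzα hβz
    simp
  have hpos : 0 < α - β := sub_pos.2 hβα
  have h := hf.2 hα hβ (div_nonneg (sub_nonneg.2 hβz) hpos.le)
    (div_nonneg (sub_nonneg.2 hzα) hpos.le) (by field_simp; ring)
  have hcomb : (z - β) / (α - β) * α + (α - z) / (α - β) * β = z := by
    field_simp; ring
  simp only [smul_eq_mul, hcomb] at h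
  calc (α - β) * f z ≤ (α - β) * ((z - β) / (α - β) * f α + (α - z) / (α - β) * f β) :=
        mul_le_mul_of_nonneg_left h hpos.le
    _ = (z - β) * f α + (α - z) * f β := by field_simp

/-- Karamata's inequality for two points: bound `f` on `[β, α]` by its chord and use that both
sides have the same total weight and moment. -/
lemma ConvexOn.mul_map_add_mul_map_le (hf : ConvexOn ℝ s f) {β α z₁ z₂ w₁ w₂ m₁ m₂ : ℝ}
    (hβ : β ∈ s) (hα : α ∈ s) (hz₁ : z₁ ∈ Set.Icc β α) (hz₂ : z₂ ∈ Set.Icc β α)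
    (hw₁ : 0 ≤ w₁) (hw₂ : 0 ≤ w₂) (hmass : w₁ + w₂ = m₁ + m₂)
    (hmoment : w₁ * z₁ + w₂ * z₂ = m₁ * α + m₂ * β) :
    w₁ * f z₁ + w₂ * f z₂ ≤ m₁ * f α + m₂ * f β := by
  rcases (hz₁.1.trans hz₁.2).eq_or_lt with hβα | hβα
  · rw [← hβα] at hz₁ hz₂ ⊢
    rw [le_antisymm hz₁.2 hz₁.1, le_antisymm hz₂.2 hz₂.1]
    linear_combination f β * hmass
  have h₁ := mul_le_mul_of_nonneg_left (hf.sub_mul_map_le hβ hα hz₁) hw₁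
  have h₂ := mul_le_mul_of_nonneg_left (hf.sub_mul_map_le hβ hα hz₂) hw₂
  refine le_of_mul_le_mul_left ?_ (sub_pos.2 hβα)
  linear_combination h₁ + h₂ + (f α - f β) * hmoment + (α * f β - β * f α) * hmass

lemma ConvexOn.card_mul_map_expect_le {ι : Type*} (hf : ConvexOn ℝ s f) (S : Finset ι)
    {x : ι → ℝ} (hx : ∀ i ∈ S, x i ∈ s) :
    #S * f (𝔼 i ∈ S, x i) ≤ ∑ i ∈ S, f (x i) := by
  rcases S.eq_empty_or_nonempty with rfl | hS
  · simp
  have hcard : (0 : ℝ) < #S := by exact_mod_cast hS.card_pos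
  have h := hf.map_sum_le (t := S) (w := fun _ => (#S : ℝ)⁻¹) (fun _ _ => by positivity)
    (by simp [hcard.ne']) hx
  simp only [smul_eq_mul, ← div_eq_inv_mul, ← sum_div, ← expect_eq_sum_div_card] at h
  rw [← card_mul_expect]
  exact mul_le_mul_of_nonneg_left h hcard.le

end Convex

lemma sum_bregman_expect {ι : Type*} (f : ℝ → ℝ) (S : Finset ι) (x : ι → ℝ) :
    ∑ i ∈ S, bregman f (x i) (𝔼 j ∈ S, x j) = ∑ i ∈ S, f (x i) - #S * f (𝔼 j ∈ S, x j) := by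
  have hcentred : ∑ i ∈ S, (x i - 𝔼 j ∈ S, x j) = 0 := by
    rw [sum_sub_distrib, sum_const, nsmul_eq_mul, card_mul_expect, sub_self]
  simp only [bregman, sum_sub_distrib, ← mul_sum, hcentred, sum_const, nsmul_eq_mul]
  ring

lemma sum_Icc_add_sum_Icc {M : Type*} [AddCommMonoid M] (g : ℕ → M) {i k j : ℕ}
    (hik : i ≤ k + 1) (hkj : k ≤ j) :
    ∑ ℓ ∈ Icc i k, g ℓ + ∑ ℓ ∈ Icc (k + 1) j, g ℓ = ∑ ℓ ∈ Icc i j, g ℓ := by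
  simp only [← Ico_add_one_right_eq_Icc]
  exact sum_Ico_consecutive g hik (by omega)

section ClusterCost

variable {f : ℝ → ℝ} {x : ℕ → ℝ} {i j k : ℕ}

lemma bregmanClusterCost_eq (f : ℝ → ℝ) (x : ℕ → ℝ) (i j : ℕ) :
    bregmanClusterCost f x i j
      = ∑ ℓ ∈ Icc i j, f (x ℓ) - #(Icc i j) * f (𝔼 ℓ ∈ Icc i j, x ℓ) := by
  rw [bregmanClusterCost, ← expect_eq_sum_div_card, sum_bregman_expect]

lemma bregmanClusterCost_of_lt (h : j < i) : bregmanClusterCost f x i j = 0 := by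
  simp [bregmanClusterCost, Icc_eq_empty_of_lt h]

lemma bregmanClusterCost_nonneg (hf : ConvexOn ℝ Set.univ f) (x : ℕ → ℝ) (i j : ℕ) :
    0 ≤ bregmanClusterCost f x i j := by
  rw [bregmanClusterCost_eq, sub_nonneg]
  exact hf.card_mul_map_expect_le _ fun _ _ => Set.mem_univ _

lemma cast_card_Icc_add_cast_card_Icc (hik : i ≤ k + 1) (hkj : k ≤ j) :
    (#(Icc i k) : ℝ) + #(Icc (k + 1) j) = #(Icc i j) := by
  simp only [Nat.card_Icc]
  norm_cast
  omega

lemma expect_Icc_mem_Icc (hx : MonotoneOn x (Set.Icc i j)) (hik : i ≤ k) (hkj : k < j) :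
    𝔼 ℓ ∈ Icc i j, x ℓ ∈ Set.Icc (𝔼 ℓ ∈ Icc i k, x ℓ) (𝔼 ℓ ∈ Icc (k + 1) j, x ℓ) := by
  have hle : 𝔼 ℓ ∈ Icc i k, x ℓ ≤ 𝔼 ℓ ∈ Icc (k + 1) j, x ℓ :=
    calc 𝔼 ℓ ∈ Icc i k, x ℓ ≤ x k := expect_le (nonempty_Icc.2 hik) fun ℓ hℓ => by
          rw [mem_Icc] at hℓ; exact hx ⟨hℓ.1, by omega⟩ ⟨hik, hkj.le⟩ hℓ.2
      _ ≤ x (k + 1) := hx ⟨hik, hkj.le⟩ ⟨by omega, hkj⟩ (Nat.le_succ k)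
      _ ≤ 𝔼 ℓ ∈ Icc (k + 1) j, x ℓ := le_expect (nonempty_Icc.2 hkj) fun ℓ hℓ => by
          rw [mem_Icc] at hℓ; exact hx ⟨by omega, hkj⟩ ⟨by omega, hℓ.2⟩ hℓ.1
  have hp : (0 : ℝ) < #(Icc i k) := by exact_mod_cast (nonempty_Icc.2 hik).card_pos
  have hq : (0 : ℝ) < #(Icc (k + 1) j) := by exact_mod_cast (nonempty_Icc.2 hkj).card_pos
  have hmoment : (#(Icc i k) + #(Icc (k + 1) j) : ℝ) * 𝔼 ℓ ∈ Icc i j, x ℓ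
      = #(Icc i k) * 𝔼 ℓ ∈ Icc i k, x ℓ + #(Icc (k + 1) j) * 𝔼 ℓ ∈ Icc (k + 1) j, x ℓ := by
    rw [cast_card_Icc_add_cast_card_Icc (by omega) hkj.le, card_mul_expect, card_mul_expect,
      card_mul_expect, sum_Icc_add_sum_Icc _ (by omega) hkj.le]
  constructor <;> nlinarith

lemma bregmanClusterCost_add_le (hf : ConvexOn ℝ Set.univ f) (hx : MonotoneOn x (Set.Icc i j))
    (hik : i ≤ k) (hkj : k < j) :
    bregmanClusterCost f x i k + bregmanClusterCost f x (k + 1) j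
      ≤ bregmanClusterCost f x i j := by
  have hmean := expect_Icc_mem_Icc hx hik hkj
  have hmass : (#(Icc i j) : ℝ) + 0 = #(Icc (k + 1) j) + #(Icc i k) := by
    rw [add_zero, ← cast_card_Icc_add_cast_card_Icc (by omega) hkj.le, add_comm]
  have hmoment : (#(Icc i j) : ℝ) * 𝔼 ℓ ∈ Icc i j, x ℓ + 0 * 𝔼 ℓ ∈ Icc i j, x ℓ
      = #(Icc (k + 1) j) * 𝔼 ℓ ∈ Icc (k + 1) j, x ℓ + #(Icc i k) * 𝔼 ℓ ∈ Icc i k, x ℓ := by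
    rw [zero_mul, add_zero, card_mul_expect, card_mul_expect, card_mul_expect,
      ← sum_Icc_add_sum_Icc _ (by omega) hkj.le, add_comm]
  have h := hf.mul_map_add_mul_map_le (Set.mem_univ _) (Set.mem_univ _) hmean hmean
    (Nat.cast_nonneg _) le_rfl hmass hmoment
  simp only [bregmanClusterCost_eq,
    ← sum_Icc_add_sum_Icc (fun ℓ => f (x ℓ)) (by omega : i ≤ k + 1) hkj.le]
  linarith

lemma bregmanClusterCost_le_of_le_of_le {i' j' : ℕ} (hf : ConvexOn ℝ Set.univ f)
    (hx : MonotoneOn x (Set.Icc i' j')) (hi : i' ≤ i) (hj : j ≤ j') :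
    bregmanClusterCost f x i j ≤ bregmanClusterCost f x i' j' := by
  rcases lt_or_ge j i with hji | hij
  · rw [bregmanClusterCost_of_lt hji]
    exact bregmanClusterCost_nonneg hf x i' j'
  have hright : bregmanClusterCost f x i j ≤ bregmanClusterCost f x i j' := by
    rcases hj.eq_or_lt with rfl | hjj
    · rfl
    linarith [bregmanClusterCost_add_le hf (hx.mono (Set.Icc_subset_Icc hi le_rfl)) hij hjj,
      bregmanClusterCost_nonneg hf x (j + 1) j']
  have hleft : bregmanClusterCost f x i j' ≤ bregmanClusterCost f x i' j' := by
    rcases hi.eq_or_lt with rfl | hii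
    · rfl
    obtain ⟨k, rfl⟩ := Nat.exists_eq_add_of_lt hii
    linarith [bregmanClusterCost_add_le hf hx (Nat.le_add_right i' k) (by omega : i' + k < j'),
      bregmanClusterCost_nonneg hf x i' (i' + k)]
  exact hright.trans hleft

lemma bregmanClusterCost_monge_of_le {u v a b : ℕ} (hf : ConvexOn ℝ Set.univ f)
    (hx : MonotoneOn x (Set.Icc u b)) (huv : u < v) (hva : v ≤ a) (hab : a < b) :
    bregmanClusterCost f x v b + bregmanClusterCost f x u a
      ≤ bregmanClusterCost f x u b + bregmanClusterCost f x v a := by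
  obtain ⟨w, rfl⟩ := Nat.exists_eq_add_of_lt huv
  have hβU := (expect_Icc_mem_Icc hx (k := a) (by omega) hab).1
  have hUα := (expect_Icc_mem_Icc hx (k := u + w) (by omega) (by omega)).2
  have hβI := (expect_Icc_mem_Icc (hx.mono (Set.Icc_subset_Icc le_rfl hab.le))
    (i := u) (k := u + w) (by omega) (by omega)).2
  have hIα := (expect_Icc_mem_Icc (hx.mono (Set.Icc_subset_Icc (by omega) le_rfl))
    (i := u + w + 1) (k := a) (by omega) hab).1
  have hsumU := sum_Icc_add_sum_Icc x (i := u) (k := a) (j := b) (by omega) hab.le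
  have hsumA := sum_Icc_add_sum_Icc x (i := u + w + 1) (k := a) (j := b) (by omega) hab.le
  have h := hf.mul_map_add_mul_map_le (w₁ := #(Icc u b)) (w₂ := #(Icc (u + w + 1) a))
    (m₁ := #(Icc (u + w + 1) b)) (m₂ := #(Icc u a)) (Set.mem_univ _) (Set.mem_univ _)
    ⟨hβU, hUα⟩ ⟨hβI, hIα⟩ (Nat.cast_nonneg _) (Nat.cast_nonneg _)
    (by simp only [Nat.card_Icc]; norm_cast; omega)
    (by simp only [card_mul_expect]; linarith)
  simp only [bregmanClusterCost_eq,
    ← sum_Icc_add_sum_Icc (fun ℓ => f (x ℓ)) (i := u) (k := a) (j := b) (by omega) hab.le,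
    ← sum_Icc_add_sum_Icc (fun ℓ => f (x ℓ)) (i := u + w + 1) (k := a) (j := b) (by omega) hab.le]
  linarith

end ClusterCost

theorem bregmanClusterCost_monge_general (f : ℝ → ℝ)
    (hconv : StrictConvexOn ℝ Set.univ f) (n : ℕ) (x : ℕ → ℝ)
    (hsort : ∀ ⦃p q : ℕ⦄, 1 ≤ p → p ≤ q → q ≤ n → x p ≤ x q)
    (u v a b : ℕ) (hu : 1 ≤ u) (huv : u < v)
    (hab : a < b) (hbn : b ≤ n) :
    bregmanClusterCost f x v b + bregmanClusterCost f x u a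
      ≤ bregmanClusterCost f x u b + bregmanClusterCost f x v a := by
  have hf := hconv.convexOn
  have hx : MonotoneOn x (Set.Icc u b) := fun p hp q hq hpq =>
    hsort (hu.trans hp.1) hpq (hq.2.trans hbn)
  rcases le_or_gt v a with hva | hav
  · exact bregmanClusterCost_monge_of_le hf hx huv hva hab
  rw [bregmanClusterCost_of_lt hav, add_zero]
  rcases le_or_gt u a with hua | hau
  · calc bregmanClusterCost f x v b + bregmanClusterCost f x u a
          ≤ bregmanClusterCost f x (a + 1) b + bregmanClusterCost f x u a := by
            gcongr
            exact bregmanClusterCost_le_of_le_of_le hf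
              (hx.mono (Set.Icc_subset_Icc (by omega) le_rfl)) hav le_rfl
      _ ≤ bregmanClusterCost f x u b := by
            rw [add_comm]
            exact bregmanClusterCost_add_le hf hx hua hab
  · rw [bregmanClusterCost_of_lt hau, add_zero]
    exact bregmanClusterCost_le_of_le_of_le hf hx huv.le le_rfl

/-- for a differentiable strictly convex `f : ℝ → ℝ`, sorted reals
`x_1 ≤ … ≤ x_n`, and indices `u < v`, `a < b` (between `1` and `n`), the
concave (Monge) inequality holds for the Bregman cluster cost:
`CC_f(v, b) + CC_f(u, a) ≤ CC_f(u, b) + CC_f(v, a)`. -/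
theorem bregmanClusterCost_monge (f : ℝ → ℝ) (hdiff : Differentiable ℝ f)
    (hconv : StrictConvexOn ℝ Set.univ f) (n : ℕ) (x : ℕ → ℝ)
    (hsort : ∀ ⦃p q : ℕ⦄, 1 ≤ p → p ≤ q → q ≤ n → x p ≤ x q)
    (u v a b : ℕ) (hu : 1 ≤ u) (huv : u < v) (hvn : v ≤ n)
    (ha : 1 ≤ a) (hab : a < b) (hbn : b ≤ n) :
    bregmanClusterCost f x v b + bregmanClusterCost f x u a
      ≤ bregmanClusterCost f x u b + bregmanClusterCost f x v a :=
  bregmanClusterCost_monge_general f hconv n x hsort u v a b hu huv hab hbn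
end

section
/- Let x_1 ≤ x_2 ≤ … ≤ x_n be real numbers and k ≥ 1. The optimal 1D k-Medians cost equals the optimal cost over interval partitions: min over all sets M = {μ_1, …, μ_k} ⊂ ℝ of at most k centroids of ∑_{ℓ=1}^{n} min_{μ ∈ M} |x_ℓ − μ| equals the minimum over all partitions of {1, …, n} into at most k consecutive intervals of the sum of the median cluster costs CC_med of the intervals. -/
/-- The absolute-distance (k-Medians) cluster cost of grouping `x_i, …, x_j`
into one cluster with the midpoint-median centroid
`μ_{i,j} = (x_{⌊(i+j)/2⌋} + x_{⌈(i+j)/2⌉}) / 2`; `0` when `i > j`. -/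
noncomputable def medianClusterCost (x : ℕ → ℝ) (i j : ℕ) : ℝ :=
  ∑ ℓ ∈ Finset.Icc i j, |x ℓ - (x ((i + j) / 2) + x ((i + j + 1) / 2)) / 2|

/-- `medianKCost x k m` is the minimum cost of partitioning `x_1, …, x_m` into
at most `k` consecutive groups, each charged its median cluster cost. -/
noncomputable def medianKCost (x : ℕ → ℝ) (k m : ℕ) : ℝ :=
  sInf { c : ℝ | ∃ b : ℕ → ℕ, Monotone b ∧ b 0 = 0 ∧ b k = m ∧
    c = ∑ t ∈ Finset.range k, medianClusterCost x (b t + 1) (b (t + 1)) }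

private lemma pair_abs {a b m μ : ℝ} (h1 : a ≤ m) (h2 : m ≤ b) :
    |a - m| + |b - m| ≤ |a - μ| + |b - μ| := by
  have h3 : b - a ≤ |a - μ| + |b - μ| := by
    have h4 : b - a = (b - μ) + (μ - a) := by ring
    have h5 := le_abs_self (b - μ)
    have h6 := le_abs_self (μ - a)
    rw [abs_sub_comm μ a] at h6
    linarith
  rw [abs_of_nonpos (by linarith), abs_of_nonneg (by linarith)]
  linarith

private lemma sum_reflect (f : ℕ → ℝ) (i j : ℕ) :
    ∑ ℓ ∈ Finset.Icc i j, f (i + j - ℓ) = ∑ ℓ ∈ Finset.Icc i j, f ℓ := by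
  apply Finset.sum_nbij' (fun ℓ => i + j - ℓ) (fun ℓ => i + j - ℓ) <;>
    simp_all [Finset.mem_Icc] <;> omega

private lemma median_opt (x : ℕ → ℝ) (i j : ℕ)
    (hmono : ∀ ⦃p q : ℕ⦄, i ≤ p → p ≤ q → q ≤ j → x p ≤ x q) (μ : ℝ) :
    medianClusterCost x i j ≤ ∑ ℓ ∈ Finset.Icc i j, |x ℓ - μ| := by
  rcases le_or_gt i j with hij | hij
  · have hilo : i ≤ (i + j) / 2 := by omega
    have hhij : (i + j + 1) / 2 ≤ j := by omega
    have hlh : (i + j) / 2 ≤ (i + j + 1) / 2 := by omega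
    set m := (x ((i + j) / 2) + x ((i + j + 1) / 2)) / 2 with hm
    have hxm1 : x ((i + j) / 2) ≤ m := by
      have := hmono hilo hlh hhij; rw [hm]; linarith
    have hxm2 : m ≤ x ((i + j + 1) / 2) := by
      have := hmono hilo hlh hhij; rw [hm]; linarith
    have key : ∀ ℓ ∈ Finset.Icc i j,
        |x ℓ - m| + |x (i + j - ℓ) - m| ≤ |x ℓ - μ| + |x (i + j - ℓ) - μ| := by
      intro ℓ hℓ
      rw [Finset.mem_Icc] at hℓ
      rcases le_or_gt ℓ ((i + j) / 2) with h | h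
      · exact pair_abs
          (le_trans (hmono hℓ.1 h (by omega)) hxm1)
          (le_trans hxm2 (hmono (by omega) (by omega) (by omega)))
      · have h1 : x (i + j - ℓ) ≤ m :=
          le_trans (hmono (by omega) (by omega) (by omega)) hxm1
        have h2 : m ≤ x ℓ := le_trans hxm2 (hmono (by omega) (by omega) hℓ.2)
        have := pair_abs (μ := μ) h1 h2
        linarith
    have hsum := Finset.sum_le_sum key
    rw [Finset.sum_add_distrib, Finset.sum_add_distrib,
      sum_reflect (fun ℓ => |x ℓ - m|) i j, sum_reflect (fun ℓ => |x ℓ - μ|) i j] at hsum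
    unfold medianClusterCost
    rw [← hm]
    linarith
  · unfold medianClusterCost
    rw [Finset.Icc_eq_empty (by omega)]
    simp

private lemma downset_card (n : ℕ) (S : Finset ℕ) (hS : S ⊆ Finset.Icc 1 n)
    (hdown : ∀ a b : ℕ, 1 ≤ a → a ≤ b → b ∈ S → a ∈ S) :
    ∀ ℓ, ℓ ∈ S ↔ 1 ≤ ℓ ∧ ℓ ≤ S.card := by
  intro ℓ
  constructor
  · intro hℓ
    have h1 : 1 ≤ ℓ := (Finset.mem_Icc.1 (hS hℓ)).1
    have h2 : Finset.Icc 1 ℓ ⊆ S := fun a ha => by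
      rw [Finset.mem_Icc] at ha; exact hdown a ℓ ha.1 ha.2 hℓ
    have := Finset.card_le_card h2
    simp [Nat.card_Icc] at this
    exact ⟨h1, by omega⟩
  · rintro ⟨h1, h2⟩
    by_contra hℓ
    have h3 : S ⊆ Finset.Icc 1 (ℓ - 1) := fun a ha => by
      have := Finset.mem_Icc.1 (hS ha)
      rw [Finset.mem_Icc]
      refine ⟨this.1, ?_⟩
      by_contra hc
      exact hℓ (hdown ℓ a h1 (by omega) ha)
    have := Finset.card_le_card h3
    simp [Nat.card_Icc] at this
    omega

private lemma nearest_centroid (c : ℕ → ℝ) (hc : Monotone c) (y : ℝ) (t s : ℕ)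
    (h1 : s < t → c s + c t < 2 * y) (h2 : t < s → 2 * y ≤ c t + c s) :
    |y - c t| ≤ |y - c s| := by
  rcases lt_trichotomy s t with h | h | h
  · have ha := h1 h
    have hb := hc h.le
    have : |y - c s| = y - c s := abs_of_nonneg (by linarith)
    rw [this, abs_le]
    constructor <;> linarith
  · rw [h]
  · have ha := h2 h
    have hb := hc h.le
    have : |y - c s| = c s - y := by
      rw [abs_sub_comm]; exact abs_of_nonneg (by linarith)
    rw [this, abs_le]
    constructor <;> linarith

private lemma sum_Ioc_partition (b : ℕ → ℕ) (hb : Monotone b) (f : ℕ → ℝ) (k : ℕ) :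
    ∑ t ∈ Finset.range k, ∑ ℓ ∈ Finset.Ioc (b t) (b (t + 1)), f ℓ
      = ∑ ℓ ∈ Finset.Ioc (b 0) (b k), f ℓ := by
  induction k with
  | zero => simp
  | succ k ih =>
      rw [Finset.sum_range_succ, ih,
        Finset.sum_Ioc_consecutive _ (hb (Nat.zero_le k)) (hb (Nat.le_succ k))]
/-- for sorted reals `x_1 ≤ … ≤ x_n` and `k ≥ 1`, the optimal 1D
`k`-Medians cost — the infimum over all nonempty sets `M` of at most `k` real
centroids of `∑_{ℓ=1}^{n} min_{μ ∈ M} |x_ℓ − μ|` — equals the minimum over all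
partitions of `{1, …, n}` into at most `k` consecutive intervals of the sum of
the median cluster costs of the intervals. -/
theorem kmedians_eq_interval_partition (n k : ℕ) (x : ℕ → ℝ)
    (hsort : ∀ ⦃p q : ℕ⦄, 1 ≤ p → p ≤ q → q ≤ n → x p ≤ x q)
    (hk : 1 ≤ k) :
    sInf { c : ℝ | ∃ M : Finset ℝ, M.Nonempty ∧ M.card ≤ k ∧
        c = ∑ ℓ ∈ Finset.Icc 1 n, sInf ((fun μ => |x ℓ - μ|) '' (M : Set ℝ)) }
      = medianKCost x k n := by
  set L := { c : ℝ | ∃ M : Finset ℝ, M.Nonempty ∧ M.card ≤ k ∧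
      c = ∑ ℓ ∈ Finset.Icc 1 n, sInf ((fun μ => |x ℓ - μ|) '' (M : Set ℝ)) } with hL
  set R := { c : ℝ | ∃ b : ℕ → ℕ, Monotone b ∧ b 0 = 0 ∧ b k = n ∧
      c = ∑ t ∈ Finset.range k, medianClusterCost x (b t + 1) (b (t + 1)) } with hR
  have hRK : medianKCost x k n = sInf R := rfl
  -- bounded below facts
  have himgbdd : ∀ (ℓ : ℕ) (M : Finset ℝ), BddBelow ((fun μ => |x ℓ - μ|) '' (M : Set ℝ)) := by
    intro ℓ M
    refine ⟨0, fun y hy => ?_⟩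
    obtain ⟨μ, _, rfl⟩ := hy
    positivity
  have hLbdd : BddBelow L := by
    refine ⟨0, fun c hc => ?_⟩
    obtain ⟨M, hMne, hMcard, rfl⟩ := hc
    apply Finset.sum_nonneg
    intro ℓ _
    apply Real.sInf_nonneg
    rintro y ⟨μ, _, rfl⟩
    positivity
  have hRbdd : BddBelow R := by
    refine ⟨0, fun c hc => ?_⟩
    obtain ⟨b, _, _, _, rfl⟩ := hc
    apply Finset.sum_nonneg
    intro t _
    apply Finset.sum_nonneg
    intro ℓ _
    positivity
  have hLne : L.Nonempty :=
    ⟨_, {0}, Finset.singleton_nonempty 0, by simp [hk], rfl⟩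
  have hRne : R.Nonempty := by
    refine ⟨_, fun t => n * min t 1, ?_, by simp, ?_, rfl⟩
    · intro a b hab
      exact Nat.mul_le_mul_left n (by omega)
    · have : min k 1 = 1 := by omega
      simp [this]
  have hIcc : Finset.Icc 1 n = Finset.Ioc 0 n := Finset.Icc_add_one_left_eq_Ioc 0 n
  rw [hRK]
  apply le_antisymm
  · -- sInf L ≤ sInf R
    apply le_csInf hRne
    rintro c ⟨b, hbm, hb0, hbk, rfl⟩
    set mt : ℕ → ℝ := fun t =>
      (x ((b t + 1 + b (t + 1)) / 2) + x ((b t + 1 + b (t + 1) + 1) / 2)) / 2 with hmt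
    set M : Finset ℝ := (Finset.range k).image mt with hM
    have hMne : M.Nonempty := (Finset.nonempty_range_iff.2 (by omega)).image _
    have hMcard : M.card ≤ k := le_trans Finset.card_image_le (by simp)
    refine le_trans (csInf_le hLbdd ⟨M, hMne, hMcard, rfl⟩) ?_
    calc ∑ ℓ ∈ Finset.Icc 1 n, sInf ((fun μ => |x ℓ - μ|) '' (M : Set ℝ))
        = ∑ t ∈ Finset.range k, ∑ ℓ ∈ Finset.Ioc (b t) (b (t + 1)),
            sInf ((fun μ => |x ℓ - μ|) '' (M : Set ℝ)) := by
          rw [sum_Ioc_partition b hbm _ k, hb0, hbk, hIcc]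
      _ ≤ ∑ t ∈ Finset.range k, medianClusterCost x (b t + 1) (b (t + 1)) := by
          apply Finset.sum_le_sum
          intro t ht
          unfold medianClusterCost
          rw [Finset.Icc_add_one_left_eq_Ioc]
          apply Finset.sum_le_sum
          intro ℓ _
          exact csInf_le (himgbdd ℓ M)
            ⟨mt t, Finset.mem_coe.2 (Finset.mem_image_of_mem mt ht), rfl⟩
  · -- sInf R ≤ sInf L
    apply le_csInf hLne
    rintro c ⟨M, hMne, hMcard, rfl⟩
    set r := M.card with hr
    have hr1 : 1 ≤ r := Finset.card_pos.2 hMne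
    set c' : ℕ → ℝ := fun s =>
      if h : s < r then (M.orderIsoOfFin hr.symm ⟨s, h⟩ : ℝ) else M.max' hMne with hc'
    have hmem : ∀ s, c' s ∈ M := by
      intro s
      rw [hc']
      dsimp only
      split_ifs with h
      · exact (M.orderIsoOfFin hr.symm ⟨s, h⟩).2
      · exact M.max'_mem hMne
    have hmono_c : Monotone c' := by
      intro a b hab
      rw [hc']
      dsimp only
      split_ifs with h1 h2 h3
      · exact Subtype.coe_le_coe.2 ((M.orderIsoOfFin hr.symm).monotone (Fin.mk_le_mk.2 hab))
      · exact M.le_max' _ (M.orderIsoOfFin hr.symm ⟨a, h1⟩).2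
      · omega
      · exact le_rfl
    have hsurj : ∀ μ ∈ M, ∃ s, s < r ∧ c' s = μ := by
      intro μ hμ
      obtain ⟨s, hs⟩ := (M.orderIsoOfFin hr.symm).surjective ⟨μ, hμ⟩
      refine ⟨s.1, s.2, ?_⟩
      rw [hc']
      dsimp only
      rw [dif_pos s.2]
      rw [show (⟨s.1, s.2⟩ : Fin r) = s from rfl, hs]
    set S : ℕ → Finset ℕ := fun t =>
      (Finset.Icc 1 n).filter (fun ℓ => 2 * x ℓ ≤ c' (t - 1) + c' t) with hS
    have hSdown : ∀ t, ∀ ℓ, ℓ ∈ S t ↔ 1 ≤ ℓ ∧ ℓ ≤ (S t).card := by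
      intro t
      apply downset_card n (S t) (Finset.filter_subset _ _)
      intro a b ha hab hb
      rw [hS, Finset.mem_filter, Finset.mem_Icc] at hb ⊢
      have hxab : x a ≤ x b := hsort ha hab hb.1.2
      exact ⟨⟨ha, le_trans hab hb.1.2⟩, by linarith [hb.2]⟩
    set b : ℕ → ℕ := fun t => if t = 0 then 0 else if t < r then (S t).card else n with hb
    have hScard_le : ∀ t, (S t).card ≤ n := by
      intro t
      have := Finset.card_le_card (Finset.filter_subset
        (fun ℓ => 2 * x ℓ ≤ c' (t - 1) + c' t) (Finset.Icc 1 n))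
      simpa [Nat.card_Icc] using this
    have hble : ∀ t, b t ≤ n := by
      intro t
      rw [hb]
      dsimp only
      split_ifs
      · exact Nat.zero_le n
      · exact hScard_le t
      · exact le_rfl
    have hSsub : ∀ t u, t ≤ u → S t ⊆ S u := by
      intro t u htu ℓ hℓ
      rw [hS, Finset.mem_filter] at hℓ ⊢
      exact ⟨hℓ.1, le_trans hℓ.2 (add_le_add (hmono_c (by omega)) (hmono_c htu))⟩
    have hbmono : Monotone b := by
      apply monotone_nat_of_le_succ
      intro t
      rw [hb]
      dsimp only
      split_ifs with h1 h2 h3 h4 h5 h6 h7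
      all_goals first
        | omega
        | exact Nat.zero_le _
        | exact Finset.card_le_card (hSsub t (t + 1) (Nat.le_succ t))
        | exact hScard_le t
        | exact False.elim (by assumption)
    have hb0 : b 0 = 0 := by simp [hb]
    have hbk : b k = n := by
      rw [hb]
      have h1 : k ≠ 0 := by omega
      have h2 : ¬ k < r := by omega
      simp [h1, h2]
    -- key: nearest centroid property
    have hkey : ∀ t, t < k → ∀ ℓ ∈ Finset.Ioc (b t) (b (t + 1)),
        ∀ μ ∈ M, |x ℓ - c' t| ≤ |x ℓ - μ| := by
      intro t _ ℓ hℓ μ hμ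
      rw [Finset.mem_Ioc] at hℓ
      have hℓn : ℓ ≤ n := le_trans hℓ.2 (hble (t + 1))
      have hℓ1 : 1 ≤ ℓ := by omega
      have htr : t < r := by
        by_contra htr
        have : b t = n := by
          rw [hb]; dsimp only
          rw [if_neg (by omega), if_neg (by omega)]
        omega
      obtain ⟨s, hsr, rfl⟩ := hsurj μ hμ
      apply nearest_centroid c' hmono_c (x ℓ) t s
      · intro hst
        have ht0 : t ≠ 0 := by omega
        have hbt : b t = (S t).card := by
          rw [hb]; dsimp only; rw [if_neg ht0, if_pos htr]
        have : ℓ ∉ S t := by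
          intro hmem'
          have := (hSdown t ℓ).1 hmem'
          omega
        rw [hS, Finset.mem_filter, Finset.mem_Icc] at this
        push_neg at this
        have hlt := this ⟨hℓ1, hℓn⟩
        have hcs : c' s ≤ c' (t - 1) := hmono_c (by omega)
        linarith
      · intro hts
        have ht1r : t + 1 < r := by omega
        have hbt1 : b (t + 1) = (S (t + 1)).card := by
          rw [hb]; dsimp only; rw [if_neg (by omega), if_pos ht1r]
        have hmem' : ℓ ∈ S (t + 1) := (hSdown (t + 1) ℓ).2 ⟨hℓ1, by omega⟩
        rw [hS, Finset.mem_filter] at hmem'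
        have h2 := hmem'.2
        have : (t + 1 : ℕ) - 1 = t := by omega
        rw [this] at h2
        have hcs : c' (t + 1) ≤ c' s := hmono_c (by omega)
        linarith
    refine le_trans (csInf_le hRbdd ⟨b, hbmono, hb0, hbk, rfl⟩) ?_
    calc ∑ t ∈ Finset.range k, medianClusterCost x (b t + 1) (b (t + 1))
        ≤ ∑ t ∈ Finset.range k, ∑ ℓ ∈ Finset.Ioc (b t) (b (t + 1)),
            sInf ((fun μ => |x ℓ - μ|) '' (M : Set ℝ)) := by
          apply Finset.sum_le_sum
          intro t ht
          rw [Finset.mem_range] at ht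
          have hstep : medianClusterCost x (b t + 1) (b (t + 1))
              ≤ ∑ ℓ ∈ Finset.Icc (b t + 1) (b (t + 1)), |x ℓ - c' t| := by
            apply median_opt
            intro p q hp hpq hq
            exact hsort (by omega) hpq (le_trans hq (hble (t + 1)))
          rw [Finset.Icc_add_one_left_eq_Ioc] at hstep
          refine le_trans hstep (Finset.sum_le_sum ?_)
          intro ℓ hℓ
          apply le_csInf ((Finset.coe_nonempty.2 hMne).image _)
          rintro y ⟨μ, hμ, rfl⟩
          exact hkey t ht ℓ hℓ μ hμ
      _ = ∑ ℓ ∈ Finset.Icc 1 n, sInf ((fun μ => |x ℓ - μ|) '' (M : Set ℝ)) := by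
          rw [sum_Ioc_partition b hbmono _ k, hb0, hbk, hIcc]
end
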